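/- arXiv:math/0005119 — 2 statements merged into one kernel-verified Lean document; each statement's English description precedes it below -/
import Mathlib

section
/- Let Q be a quiver whose underlying graph has no loops, let i be an admissible vertex of Q (a source or a sink), and let σ_iQ be the quiver obtained by reversing all arrows incident to i. Then the Euler cocycle is functorial under the reflection: ε_{σ_iQ}(σ_i α, σ_i β) = ε_Q(α, β) for all α, β ∈ Z[I], where ε_Q(α,β) = (−1)^{e_Q(α,β)} and σ_i(α) = α − <i,α> i. -/
open Finset

/-- The Euler form of a quiver, extended biadditively from generators. -/
def eulerForm {I Ω : Type} [Fintype I] [Fintype Ω] (src tgt : Ω → I)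
    (α β : I → ℤ) : ℤ :=
  (∑ i, α i * β i) - ∑ h, α (src h) * β (tgt h)

/-- The Euler cocycle `ε_Q(α,β) = (-1)^{e_Q(α,β)} ∈ {±1}`. -/
noncomputable def eulerCocycle {I Ω : Type} [Fintype I] [Fintype Ω] (src tgt : Ω → I)
    (α β : I → ℤ) : ℤˣ :=
  (-1 : ℤˣ) ^ eulerForm src tgt α β

/-- The source map of the quiver `σ_i Q` obtained by reversing all arrows incident to `i`. -/
def reflSrc {I Ω : Type} [DecidableEq I] (src tgt : Ω → I) (i : I) (h : Ω) : I :=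
  if src h = i ∨ tgt h = i then tgt h else src h

/-- The target map of the quiver `σ_i Q` obtained by reversing all arrows incident to `i`. -/
def reflTgt {I Ω : Type} [DecidableEq I] (src tgt : Ω → I) (i : I) (h : Ω) : I :=
  if src h = i ∨ tgt h = i then src h else tgt h

/-- The simple reflection `σ_i(α) = α - ⟨i,α⟩ i` where
`⟨α,β⟩ = e_Q(α,β) + e_Q(β,α)`. -/
def quiverReflection {I Ω : Type} [Fintype I] [Fintype Ω] [DecidableEq I]
    (src tgt : Ω → I) (i : I) (α : I → ℤ) : I → ℤ :=
  α - (eulerForm src tgt (Pi.single i 1) α + eulerForm src tgt α (Pi.single i 1)) •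
    Pi.single i 1


lemma eulerForm_swap {I Ω : Type} [Fintype I] [Fintype Ω] (src tgt : Ω → I)
    (α β : I → ℤ) : eulerForm tgt src β α = eulerForm src tgt α β := by
  unfold eulerForm
  congr 1
  · exact Finset.sum_congr rfl fun j _ => mul_comm _ _
  · exact Finset.sum_congr rfl fun h _ => mul_comm _ _

lemma sum_single_mul {I : Type} [Fintype I] [DecidableEq I] (i : I) (α : I → ℤ) :
    ∑ j, (Pi.single i 1 : I → ℤ) j * α j = α i := by
  simp [Pi.single_apply, Finset.sum_ite_eq]

lemma sum_mul_single {I : Type} [Fintype I] [DecidableEq I] (i : I) (α : I → ℤ) :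
    ∑ j, α j * (Pi.single i 1 : I → ℤ) j = α i := by
  simp [Pi.single_apply, Finset.sum_ite_eq]

lemma single_sq {I : Type} [Fintype I] [DecidableEq I] (i : I) :
    ∑ j, (Pi.single i 1 : I → ℤ) j * (Pi.single i 1 : I → ℤ) j = 1 := by
  simp [Pi.single_apply, Finset.sum_ite_eq]

lemma eulerForm_reflection_sink {I Ω : Type} [Fintype I] [Fintype Ω] [DecidableEq I]
    (src tgt : Ω → I) (i : I) (hs : ∀ h, src h ≠ i) (α β : I → ℤ) :
    eulerForm (reflSrc src tgt i) (reflTgt src tgt i)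
        (quiverReflection src tgt i α) (quiverReflection src tgt i β) =
      eulerForm src tgt α β := by
  have hPi : (Pi.single i 1 : I → ℤ) i = 1 := by simp
  have hPne : ∀ j, j ≠ i → (Pi.single i 1 : I → ℤ) j = 0 := fun j hj => by
    simp [Pi.single_apply, hj]
  -- the coefficient ⟨i, γ⟩
  have hcoef : ∀ γ : I → ℤ,
      eulerForm src tgt (Pi.single i 1) γ + eulerForm src tgt γ (Pi.single i 1) =
        2 * γ i - ∑ h, if tgt h = i then γ (src h) else 0 := by
    intro γ
    unfold eulerForm
    have h1 : ∑ h, (Pi.single i 1 : I → ℤ) (src h) * γ (tgt h) = 0 :=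
      Finset.sum_eq_zero fun h _ => by rw [hPne _ (hs h)]; ring
    have h2 : ∑ h, γ (src h) * (Pi.single i 1 : I → ℤ) (tgt h) =
        ∑ h, if tgt h = i then γ (src h) else 0 :=
      Finset.sum_congr rfl fun h _ => by
        by_cases hh : tgt h = i
        · rw [if_pos hh, hh, hPi, mul_one]
        · rw [if_neg hh, hPne _ hh, mul_zero]
    rw [h1, h2, sum_single_mul, sum_mul_single]
    ring
  set S1 : ℤ := ∑ h, if tgt h = i then α (src h) else 0 with hS1
  set S2 : ℤ := ∑ h, if tgt h = i then β (src h) else 0 with hS2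
  have hσα : ∀ j, quiverReflection src tgt i α j =
      α j - (2 * α i - S1) * (Pi.single i 1 : I → ℤ) j := fun j => by
    simp only [quiverReflection, Pi.sub_apply, Pi.smul_apply, smul_eq_mul, hcoef α, hS1]
  have hσβ : ∀ j, quiverReflection src tgt i β j =
      β j - (2 * β i - S2) * (Pi.single i 1 : I → ℤ) j := fun j => by
    simp only [quiverReflection, Pi.sub_apply, Pi.smul_apply, smul_eq_mul, hcoef β, hS2]
  have hdiag : ∑ j, quiverReflection src tgt i α j * quiverReflection src tgt i β j =
      (∑ j, α j * β j) - (2 * β i - S2) * α i - (2 * α i - S1) * β i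
        + (2 * α i - S1) * (2 * β i - S2) := by
    have e1 : ∀ j, quiverReflection src tgt i α j * quiverReflection src tgt i β j =
        α j * β j - (2 * β i - S2) * (α j * (Pi.single i 1 : I → ℤ) j)
          - (2 * α i - S1) * ((Pi.single i 1 : I → ℤ) j * β j)
          + ((2 * α i - S1) * (2 * β i - S2)) *
            ((Pi.single i 1 : I → ℤ) j * (Pi.single i 1 : I → ℤ) j) := fun j => by
      rw [hσα j, hσβ j]; ring
    rw [Finset.sum_congr rfl fun j _ => e1 j]
    rw [Finset.sum_add_distrib, Finset.sum_sub_distrib, Finset.sum_sub_distrib,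
      ← Finset.mul_sum, ← Finset.mul_sum, ← Finset.mul_sum,
      sum_mul_single, sum_single_mul, single_sq, mul_one]
  have harrow : ∑ h, quiverReflection src tgt i α (reflSrc src tgt i h) *
        quiverReflection src tgt i β (reflTgt src tgt i h) =
      (α i - (2 * α i - S1)) * S2 + ∑ h, if tgt h = i then 0 else α (src h) * β (tgt h) := by
    have e2 : ∀ h, quiverReflection src tgt i α (reflSrc src tgt i h) *
        quiverReflection src tgt i β (reflTgt src tgt i h) =
        (α i - (2 * α i - S1)) * (if tgt h = i then β (src h) else 0)
          + (if tgt h = i then 0 else α (src h) * β (tgt h)) := fun h => by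
      by_cases hh : tgt h = i
      · have hc : src h = i ∨ tgt h = i := Or.inr hh
        simp only [reflSrc, reflTgt]
        rw [if_pos hc, if_pos hc, hh, if_pos rfl, if_pos rfl, hσα i, hσβ (src h), hPi,
          hPne _ (hs h)]
        ring
      · have hc : ¬(src h = i ∨ tgt h = i) := by
          rintro (h1 | h2); exacts [hs h h1, hh h2]
        simp only [reflSrc, reflTgt]
        rw [if_neg hc, if_neg hc, if_neg hh, if_neg hh, hσα (src h), hσβ (tgt h),
          hPne _ (hs h), hPne _ hh]
        ring
    rw [Finset.sum_congr rfl fun h _ => e2 h, Finset.sum_add_distrib, ← Finset.mul_sum]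
  have hrhs : ∑ h, α (src h) * β (tgt h) =
      β i * S1 + ∑ h, if tgt h = i then 0 else α (src h) * β (tgt h) := by
    have e3 : ∀ h, α (src h) * β (tgt h) =
        β i * (if tgt h = i then α (src h) else 0)
          + (if tgt h = i then 0 else α (src h) * β (tgt h)) := fun h => by
      by_cases hh : tgt h = i
      · simp [hh]; ring
      · simp [hh]
    rw [Finset.sum_congr rfl fun h _ => e3 h, Finset.sum_add_distrib, ← Finset.mul_sum]
  unfold eulerForm
  rw [hdiag, harrow, hrhs]
  ring

lemma reflSrc_swap {I Ω : Type} [DecidableEq I] (src tgt : Ω → I) (i : I) :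
    reflSrc src tgt i = reflTgt tgt src i := by
  funext h
  simp only [reflSrc, reflTgt, or_comm]

lemma reflTgt_swap {I Ω : Type} [DecidableEq I] (src tgt : Ω → I) (i : I) :
    reflTgt src tgt i = reflSrc tgt src i := by
  funext h
  simp only [reflSrc, reflTgt, or_comm]

lemma quiverReflection_swap {I Ω : Type} [Fintype I] [Fintype Ω] [DecidableEq I]
    (src tgt : Ω → I) (i : I) (α : I → ℤ) :
    quiverReflection src tgt i α = quiverReflection tgt src i α := by
  unfold quiverReflection
  rw [← eulerForm_swap src tgt α (Pi.single i 1), ← eulerForm_swap src tgt (Pi.single i 1) α,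
    add_comm (eulerForm tgt src α (Pi.single i 1))]

lemma eulerForm_reflection {I Ω : Type} [Fintype I] [Fintype Ω] [DecidableEq I]
    (src tgt : Ω → I) (i : I)
    (hadm : (∀ h, tgt h ≠ i) ∨ (∀ h, src h ≠ i)) (α β : I → ℤ) :
    eulerForm (reflSrc src tgt i) (reflTgt src tgt i)
        (quiverReflection src tgt i α) (quiverReflection src tgt i β) =
      eulerForm src tgt α β := by
  rcases hadm with hsrc | hsink
  · calc eulerForm (reflSrc src tgt i) (reflTgt src tgt i)
          (quiverReflection src tgt i α) (quiverReflection src tgt i β)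
        = eulerForm (reflSrc tgt src i) (reflTgt tgt src i)
            (quiverReflection tgt src i β) (quiverReflection tgt src i α) := by
          rw [quiverReflection_swap src tgt i α, quiverReflection_swap src tgt i β,
            reflSrc_swap src tgt i, reflTgt_swap src tgt i]
          exact eulerForm_swap _ _ _ _
      _ = eulerForm tgt src β α := eulerForm_reflection_sink tgt src i hsrc β α
      _ = eulerForm src tgt α β := eulerForm_swap src tgt α β
  · exact eulerForm_reflection_sink src tgt i hsink α β

/-- Let `Q` be a quiver without loops and `i` an admissible (source or sink) vertex.
The Euler cocycle is functorial under the reflection: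
`ε_{σ_iQ}(σ_i α, σ_i β) = ε_Q(α, β)` for all `α, β ∈ ℤ[I]`. -/
theorem euler_cocycle_reflection {I Ω : Type} [Fintype I] [Fintype Ω] [DecidableEq I]
    (src tgt : Ω → I) (noloops : ∀ h, src h ≠ tgt h) (i : I)
    (hadm : (∀ h, tgt h ≠ i) ∨ (∀ h, src h ≠ i))
    (α β : I → ℤ) :
    eulerCocycle (reflSrc src tgt i) (reflTgt src tgt i)
        (quiverReflection src tgt i α) (quiverReflection src tgt i β) =
      eulerCocycle src tgt α β := by
  unfold eulerCocycle
  rw [eulerForm_reflection src tgt i hadm α β]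
end

section
/- Let Q be a quiver of finite type with positive roots R_+ and Euler cocycle ε. Define a bracket on the free C-vector space with basis {ẽ_α}_{α ∈ R_+} by [ẽ_α, ẽ_β] = ε(α,β) ẽ_{α+β} if α+β ∈ R_+ and 0 otherwise. Then this bracket is antisymmetric and satisfies the Jacobi identity, so it defines a Lie algebra structure. -/
open Finset

/-- The symmetrized Euler form `⟨α,β⟩ = e(α,β) + e(β,α)`. -/
def symForm {I Ω : Type} [Fintype I] [Fintype Ω] (src tgt : Ω → I)
    (α β : I → ℤ) : ℤ :=
  eulerForm src tgt α β + eulerForm src tgt β α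

/-- A positive root of a quiver of finite type: a nonnegative vector of norm 2. -/
def IsPosRoot {I Ω : Type} [Fintype I] [Fintype Ω] (src tgt : Ω → I) (α : I → ℤ) : Prop :=
  (∀ j, 0 ≤ α j) ∧ symForm src tgt α α = 2

/-- The set of positive roots, as a type. -/
def PosRoot {I Ω : Type} [Fintype I] [Fintype Ω] (src tgt : Ω → I) : Type :=
  {α : I → ℤ // IsPosRoot src tgt α}

/-- The bracket on the free `ℂ`-vector space with basis `{ẽ_α}_{α ∈ R₊}`, defined on
basis vectors by `[ẽ_α, ẽ_β] = ε(α,β) ẽ_{α+β}` if `α+β ∈ R₊` and `0` otherwise, where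
`ε(α,β) = (-1)^{e(α,β)}` is the Euler cocycle, and extended bilinearly. -/
noncomputable def epsilonBracket {I Ω : Type} [Fintype I] [Fintype Ω] (src tgt : Ω → I)
    (f g : PosRoot src tgt →₀ ℂ) : PosRoot src tgt →₀ ℂ := by
  classical
  exact f.sum fun α a => g.sum fun β b =>
    if h : IsPosRoot src tgt (α.1 + β.1) then
      (a * b * (-1 : ℂ) ^ eulerForm src tgt α.1 β.1) • Finsupp.single ⟨α.1 + β.1, h⟩ 1
    else 0

/-!
Antisymmetry and the Jacobi identity are multilinear, so it suffices to check them on basis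
vectors. Antisymmetry on `ẽ_α, ẽ_β` is `ε(α,β) = -ε(β,α)`, which holds because `⟨α,β⟩ = -1` whenever
`α + β` is a root. For Jacobi, positive definiteness gives `⟨α,β⟩ ≥ -1` for positive roots
(as `⟨α+β, α+β⟩ > 0`), and `α + β` is a root exactly when `⟨α,β⟩ = -1`. If `α + β + γ` is not a
root every term vanishes; if it is, `⟨α,β⟩ + ⟨β,γ⟩ + ⟨γ,α⟩ = -2` forces, up to cyclic rotation,
`⟨α,β⟩ = 0` and `⟨β,γ⟩ = ⟨γ,α⟩ = -1`. Then `[ẽ_γ, [ẽ_α, ẽ_β]] = 0` and the remaining two terms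
cancel by bimultiplicativity of `ε`.
-/

section Forms

variable {I Ω : Type} [Fintype I] [Fintype Ω] (src tgt : Ω → I)

lemma eulerForm_add_left (α α' β : I → ℤ) :
    eulerForm src tgt (α + α') β = eulerForm src tgt α β + eulerForm src tgt α' β := by
  simp only [eulerForm, Pi.add_apply, add_mul, sum_add_distrib]
  ring

lemma eulerForm_add_right (α β β' : I → ℤ) :
    eulerForm src tgt α (β + β') = eulerForm src tgt α β + eulerForm src tgt α β' := by
  simp only [eulerForm, Pi.add_apply, mul_add, sum_add_distrib]
  ring

lemma symForm_comm (α β : I → ℤ) : symForm src tgt α β = symForm src tgt β α :=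
  add_comm _ _

lemma symForm_add_left (α α' β : I → ℤ) :
    symForm src tgt (α + α') β = symForm src tgt α β + symForm src tgt α' β := by
  simp only [symForm, eulerForm_add_left, eulerForm_add_right]
  ring

lemma symForm_add_right (α β β' : I → ℤ) :
    symForm src tgt α (β + β') = symForm src tgt α β + symForm src tgt α β' := by
  rw [symForm_comm, symForm_add_left, symForm_comm, symForm_comm src tgt β']

lemma sum_mul_mul_eulerForm_single [DecidableEq I] (α β : I → ℤ) :
    ∑ i, ∑ j, α i * β j * eulerForm src tgt (Pi.single i 1) (Pi.single j 1) =
      eulerForm src tgt α β := by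
  simp only [eulerForm, Pi.single_apply, mul_sub, mul_sum, sum_sub_distrib, mul_ite, mul_one,
    mul_zero]
  congr 1
  · simp
  · rw [sum_congr rfl fun i _ => sum_comm, sum_comm]
    simp

lemma sum_mul_mul_symForm_single [DecidableEq I] (α β : I → ℤ) :
    ∑ i, ∑ j, α i * β j * symForm src tgt (Pi.single i 1) (Pi.single j 1) =
      symForm src tgt α β := by
  simp only [symForm, mul_add, sum_add_distrib, sum_mul_mul_eulerForm_single]
  rw [sum_comm (f := fun i j => α i * β j * eulerForm src tgt _ _),
    ← sum_mul_mul_eulerForm_single src tgt β α]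
  simp only [mul_comm (α _)]

lemma symForm_add_self (α β : I → ℤ) :
    symForm src tgt (α + β) (α + β) =
      symForm src tgt α α + 2 * symForm src tgt α β + symForm src tgt β β := by
  rw [symForm_add_left, symForm_add_right, symForm_add_right, symForm_comm src tgt β α]
  ring

lemma symForm_self_pos [DecidableEq I]
    (hpos : ∀ v : I → ℝ, v ≠ 0 →
      0 < ∑ i, ∑ j, v i * v j * ((symForm src tgt (Pi.single i 1) (Pi.single j 1) : ℤ) : ℝ))
    {v : I → ℤ} (hv : v ≠ 0) : 0 < symForm src tgt v v := by
  have hv' : (fun i => (v i : ℝ)) ≠ 0 := by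
    contrapose! hv
    ext i
    simpa using congrFun hv i
  have h := hpos _ hv'
  rw [← sum_mul_mul_symForm_single src tgt v v]
  exact_mod_cast h

lemma neg_one_zpow_eulerForm_swap {K : Type*} [DivisionRing K] (α β : I → ℤ) :
    (-1 : K) ^ eulerForm src tgt α β =
      (-1 : K) ^ symForm src tgt α β * (-1 : K) ^ eulerForm src tgt β α := by
  rw [symForm, zpow_add₀ (by norm_num), mul_assoc, ← zpow_add₀ (by norm_num), ← two_mul,
    zpow_mul]
  norm_num

end Forms

section Roots

variable {I Ω : Type} [Fintype I] [Fintype Ω] {src tgt : Ω → I}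

lemma PosRoot.add_ne_zero (x y : PosRoot src tgt) : x.1 + y.1 ≠ 0 := by
  intro h
  have hx : x.1 = 0 := funext fun i => by
    have := congrFun h i
    have := x.2.1 i
    have := y.2.1 i
    simp only [Pi.add_apply, Pi.zero_apply] at *
    omega
  have := x.2.2
  simp [hx, symForm, eulerForm] at this

lemma PosRoot.neg_one_le_symForm (hpos : ∀ v : I → ℤ, v ≠ 0 → 0 < symForm src tgt v v)
    (x y : PosRoot src tgt) : -1 ≤ symForm src tgt x.1 y.1 := by
  have h := hpos _ (x.add_ne_zero y)
  rw [symForm_add_self, x.2.2, y.2.2] at h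
  omega

lemma PosRoot.isPosRoot_add_iff (x y : PosRoot src tgt) :
    IsPosRoot src tgt (x.1 + y.1) ↔ symForm src tgt x.1 y.1 = -1 := by
  rw [IsPosRoot, symForm_add_self, x.2.2, y.2.2]
  constructor
  · rintro ⟨-, h⟩
    omega
  · intro h
    exact ⟨fun j => add_nonneg (x.2.1 j) (y.2.1 j), by omega⟩

end Roots

theorem Finsupp.eq_zero_of_map_add_of_map_single {α M N : Type*} [AddZeroClass M] [AddGroup N]
    {F : (α →₀ M) → N} (hadd : ∀ x y, F (x + y) = F x + F y)
    (hsingle : ∀ a m, F (Finsupp.single a m) = 0) (x : α →₀ M) : F x = 0 :=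
  DFunLike.congr_fun (Finsupp.addHom_ext (f := AddMonoidHom.mk' F hadd) (g := 0) hsingle) x

section Bracket

variable {I Ω : Type} [Fintype I] [Fintype Ω] {src tgt : Ω → I}

def PosRoot.add (α β : PosRoot src tgt) (h : IsPosRoot src tgt (α.1 + β.1)) : PosRoot src tgt :=
  ⟨α.1 + β.1, h⟩

lemma PosRoot.val_add (α β : PosRoot src tgt) (h : IsPosRoot src tgt (α.1 + β.1)) :
    (α.add β h).1 = α.1 + β.1 :=
  rfl

lemma epsilonBracket_add_left (f f' g : PosRoot src tgt →₀ ℂ) :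
    epsilonBracket src tgt (f + f') g =
      epsilonBracket src tgt f g + epsilonBracket src tgt f' g := by
  unfold epsilonBracket
  refine Finsupp.sum_add_index' (fun α => by simp) (fun α a a' => ?_)
  rw [← Finsupp.sum_add]
  refine Finsupp.sum_congr fun β _ => ?_
  split
  · rw [← add_smul, add_mul, add_mul]
  · rw [add_zero]

lemma epsilonBracket_add_right (f g g' : PosRoot src tgt →₀ ℂ) :
    epsilonBracket src tgt f (g + g') =
      epsilonBracket src tgt f g + epsilonBracket src tgt f g' := by
  unfold epsilonBracket
  rw [← Finsupp.sum_add]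
  refine Finsupp.sum_congr fun α _ => ?_
  refine Finsupp.sum_add_index' (fun β => by split <;> simp) (fun β b b' => ?_)
  split
  · rw [← add_smul, mul_add, add_mul]
  · rw [add_zero]

lemma epsilonBracket_zero_right (f : PosRoot src tgt →₀ ℂ) : epsilonBracket src tgt f 0 = 0 := by
  simp [epsilonBracket]

lemma epsilonBracket_single_single_of_isPosRoot {α β : PosRoot src tgt}
    (h : IsPosRoot src tgt (α.1 + β.1)) (a b : ℂ) :
    epsilonBracket src tgt (Finsupp.single α a) (Finsupp.single β b) =
      Finsupp.single (α.add β h) (a * b * (-1 : ℂ) ^ eulerForm src tgt α.1 β.1) := by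
  simp only [epsilonBracket, Finsupp.sum_single_index, zero_mul, mul_zero, zero_smul, dite_eq_ite,
    ite_self, dif_pos h]
  exact Finsupp.smul_single_one _ _

lemma epsilonBracket_single_single_of_not_isPosRoot {α β : PosRoot src tgt}
    (h : ¬ IsPosRoot src tgt (α.1 + β.1)) (a b : ℂ) :
    epsilonBracket src tgt (Finsupp.single α a) (Finsupp.single β b) = 0 := by
  simp [epsilonBracket, h]

end Bracket

section Lie

variable {I Ω : Type} [Fintype I] [Fintype Ω] {src tgt : Ω → I}

lemma epsilonBracket_single_add_swap (α β : PosRoot src tgt) (a b : ℂ) :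
    epsilonBracket src tgt (Finsupp.single α a) (Finsupp.single β b) +
      epsilonBracket src tgt (Finsupp.single β b) (Finsupp.single α a) = 0 := by
  by_cases h : IsPosRoot src tgt (α.1 + β.1)
  · have h' : IsPosRoot src tgt (β.1 + α.1) := add_comm α.1 β.1 ▸ h
    have hroot : β.add α h' = α.add β h := Subtype.ext (add_comm _ _)
    have hsign : (-1 : ℂ) ^ eulerForm src tgt α.1 β.1 = -(-1 : ℂ) ^ eulerForm src tgt β.1 α.1 := by
      rw [neg_one_zpow_eulerForm_swap, (α.isPosRoot_add_iff β).1 h]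
      norm_num
    rw [epsilonBracket_single_single_of_isPosRoot h, epsilonBracket_single_single_of_isPosRoot h',
      hroot, ← Finsupp.single_add, hsign, Finsupp.single_eq_zero]
    ring
  · rw [epsilonBracket_single_single_of_not_isPosRoot h,
      epsilonBracket_single_single_of_not_isPosRoot (add_comm α.1 β.1 ▸ h), add_zero]

lemma epsilonBracket_add_swap (f g : PosRoot src tgt →₀ ℂ) :
    epsilonBracket src tgt f g + epsilonBracket src tgt g f = 0 := by
  refine Finsupp.eq_zero_of_map_add_of_map_single
    (F := fun f => epsilonBracket src tgt f g + epsilonBracket src tgt g f)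
    (fun f f' => ?_) (fun α a => ?_) f
  · simp only [epsilonBracket_add_left, epsilonBracket_add_right]
    abel
  · refine Finsupp.eq_zero_of_map_add_of_map_single
      (F := fun g =>
        epsilonBracket src tgt (.single α a) g + epsilonBracket src tgt g (.single α a))
      (fun g g' => ?_) (fun β b => epsilonBracket_single_add_swap α β a b) g
    simp only [epsilonBracket_add_left, epsilonBracket_add_right]
    abel

noncomputable def jacobiator (f g h : PosRoot src tgt →₀ ℂ) : PosRoot src tgt →₀ ℂ :=
  epsilonBracket src tgt f (epsilonBracket src tgt g h) +
    epsilonBracket src tgt g (epsilonBracket src tgt h f) +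
    epsilonBracket src tgt h (epsilonBracket src tgt f g)

lemma jacobiator_rotate (f g h : PosRoot src tgt →₀ ℂ) :
    jacobiator f g h = jacobiator g h f := by
  simp only [jacobiator]
  abel

lemma jacobiator_add_left (f f' g h : PosRoot src tgt →₀ ℂ) :
    jacobiator (f + f') g h = jacobiator f g h + jacobiator f' g h := by
  simp only [jacobiator, epsilonBracket_add_left, epsilonBracket_add_right]
  abel

lemma epsilonBracket_single_epsilonBracket_of_not_isPosRoot {α β γ : PosRoot src tgt}
    (h : ¬ IsPosRoot src tgt (α.1 + β.1 + γ.1)) (a b c : ℂ) :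
    epsilonBracket src tgt (.single α a)
      (epsilonBracket src tgt (.single β b) (.single γ c)) = 0 := by
  by_cases hβγ : IsPosRoot src tgt (β.1 + γ.1)
  · rw [epsilonBracket_single_single_of_isPosRoot hβγ,
      epsilonBracket_single_single_of_not_isPosRoot (β := β.add γ hβγ)
        (by rwa [PosRoot.val_add, ← add_assoc])]
  · rw [epsilonBracket_single_single_of_not_isPosRoot hβγ, epsilonBracket_zero_right]

lemma jacobiator_single_of_symForm {α β γ : PosRoot src tgt}
    (hαβ : symForm src tgt α.1 β.1 = 0) (hβγ : symForm src tgt β.1 γ.1 = -1)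
    (hγα : symForm src tgt γ.1 α.1 = -1) (a b c : ℂ) :
    jacobiator (.single α a) (.single β b) (.single γ c) = 0 := by
  have rβγ := (β.isPosRoot_add_iff γ).2 hβγ
  have rγα := (γ.isPosRoot_add_iff α).2 hγα
  have rαβ : ¬ IsPosRoot src tgt (α.1 + β.1) := by
    rw [α.isPosRoot_add_iff β, hαβ]
    norm_num
  have hαγ : symForm src tgt α.1 γ.1 = -1 := symForm_comm src tgt γ.1 α.1 ▸ hγα
  have hβα : symForm src tgt β.1 α.1 = 0 := symForm_comm src tgt α.1 β.1 ▸ hαβ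
  have r₁ : IsPosRoot src tgt (α.1 + (β.add γ rβγ).1) := (α.isPosRoot_add_iff _).2 <| by
    rw [PosRoot.val_add, symForm_add_right, hαβ, hαγ]
    norm_num
  have r₂ : IsPosRoot src tgt (β.1 + (γ.add α rγα).1) := (β.isPosRoot_add_iff _).2 <| by
    rw [PosRoot.val_add, symForm_add_right, hβγ, hβα]
    norm_num
  have hroot : β.add (γ.add α rγα) r₂ = α.add (β.add γ rβγ) r₁ :=
    Subtype.ext (show β.1 + (γ.1 + α.1) = α.1 + (β.1 + γ.1) by abel)
  rw [jacobiator, epsilonBracket_single_single_of_isPosRoot rβγ,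
    epsilonBracket_single_single_of_isPosRoot rγα,
    epsilonBracket_single_single_of_not_isPosRoot rαβ, epsilonBracket_zero_right, add_zero, epsilonBracket_single_single_of_isPosRoot r₁,
    epsilonBracket_single_single_of_isPosRoot r₂, hroot, ← Finsupp.single_add,
    Finsupp.single_eq_zero]
  rw [PosRoot.val_add, PosRoot.val_add, eulerForm_add_right, eulerForm_add_right,
    zpow_add₀ (by norm_num), zpow_add₀ (by norm_num),
    neg_one_zpow_eulerForm_swap src tgt α.1 β.1, hαβ,
    neg_one_zpow_eulerForm_swap src tgt α.1 γ.1, hαγ]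
  norm_num
  ring

lemma jacobiator_single (hpos : ∀ v : I → ℤ, v ≠ 0 → 0 < symForm src tgt v v)
    (α β γ : PosRoot src tgt) (a b c : ℂ) :
    jacobiator (.single α a) (.single β b) (.single γ c) = 0 := by
  by_cases hs : IsPosRoot src tgt (α.1 + β.1 + γ.1)
  · have hnorm := hs.2
    rw [symForm_add_self, symForm_add_self, symForm_add_left, α.2.2, β.2.2, γ.2.2,
      symForm_comm src tgt α.1 γ.1] at hnorm
    have := α.neg_one_le_symForm hpos β
    have := β.neg_one_le_symForm hpos γ
    have := γ.neg_one_le_symForm hpos α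
    obtain ⟨h₁, h₂, h₃⟩ | ⟨h₁, h₂, h₃⟩ | ⟨h₁, h₂, h₃⟩ :
        (symForm src tgt α.1 β.1 = 0 ∧ symForm src tgt β.1 γ.1 = -1 ∧
          symForm src tgt γ.1 α.1 = -1) ∨
        (symForm src tgt β.1 γ.1 = 0 ∧ symForm src tgt γ.1 α.1 = -1 ∧
          symForm src tgt α.1 β.1 = -1) ∨
        (symForm src tgt γ.1 α.1 = 0 ∧ symForm src tgt α.1 β.1 = -1 ∧
          symForm src tgt β.1 γ.1 = -1) := by omega
    · exact jacobiator_single_of_symForm h₁ h₂ h₃ a b c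
    · rw [jacobiator_rotate]
      exact jacobiator_single_of_symForm h₁ h₂ h₃ b c a
    · rw [← jacobiator_rotate]
      exact jacobiator_single_of_symForm h₁ h₂ h₃ c a b
  · rw [jacobiator, epsilonBracket_single_epsilonBracket_of_not_isPosRoot hs,
      epsilonBracket_single_epsilonBracket_of_not_isPosRoot (by rwa [← add_rotate]),
      epsilonBracket_single_epsilonBracket_of_not_isPosRoot (by rwa [add_rotate]),
      add_zero, add_zero]

lemma jacobiator_eq_zero (hpos : ∀ v : I → ℤ, v ≠ 0 → 0 < symForm src tgt v v)
    (f g h : PosRoot src tgt →₀ ℂ) : jacobiator f g h = 0 := by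
  refine Finsupp.eq_zero_of_map_add_of_map_single (F := (jacobiator · g h))
    (fun f f' => jacobiator_add_left f f' g h) (fun α a => ?_) f
  rw [jacobiator_rotate]
  refine Finsupp.eq_zero_of_map_add_of_map_single (F := (jacobiator · h (.single α a)))
    (fun g g' => jacobiator_add_left g g' _ _) (fun β b => ?_) g
  rw [jacobiator_rotate]
  refine Finsupp.eq_zero_of_map_add_of_map_single (F := (jacobiator · (.single α a) (.single β b)))
    (fun h h' => jacobiator_add_left h h' _ _) (fun γ c => ?_) h
  rw [jacobiator_rotate]
  exact jacobiator_single hpos α β γ a b c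

end Lie

/-- (Frenkel–Kac, Segal.)  For a quiver `Q` of finite type, the bracket defined by the
Euler cocycle on the free vector space with basis indexed by the positive roots is
antisymmetric and satisfies the Jacobi identity, so it defines a Lie algebra. -/
theorem epsilonBracket_lie {I Ω : Type} [Fintype I] [Fintype Ω] [DecidableEq I]
    (src tgt : Ω → I)
    (hpos : ∀ v : I → ℝ, v ≠ 0 →
      0 < ∑ i, ∑ j, v i * v j * ((symForm src tgt (Pi.single i 1) (Pi.single j 1) : ℤ) : ℝ)) :
    (∀ f g : PosRoot src tgt →₀ ℂ,
      epsilonBracket src tgt f g = - epsilonBracket src tgt g f) ∧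
    (∀ f g h : PosRoot src tgt →₀ ℂ,
      epsilonBracket src tgt f (epsilonBracket src tgt g h) +
        epsilonBracket src tgt g (epsilonBracket src tgt h f) +
        epsilonBracket src tgt h (epsilonBracket src tgt f g) = 0) :=
  ⟨fun f g => eq_neg_of_add_eq_zero_left (epsilonBracket_add_swap f g),
    jacobiator_eq_zero fun _ => symForm_self_pos src tgt hpos⟩
end
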